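/- arXiv:1303.5168 — 3 statements merged into one kernel-verified Lean document; each statement's English description precedes it below -/
import Mathlib

section
/- The logarithm of the hyperdistance satisfies the triangle inequality: for all g, h ∈ GL₂⁺(ℚ), δ₁(gh) ≤ δ₁(g)·δ₁(h), where δ₁(g) = det(α_g·g) and α_g is the smallest positive rational with α_g·g ∈ M₂(ℤ). -/
open Matrix

/-- A rational 2×2 matrix has integer entries. -/
def IntEntries (m : Matrix (Fin 2) (Fin 2) ℚ) : Prop := ∀ i j, ∃ z : ℤ, m i j = (z : ℚ)

/-- `a` is the smallest positive rational making `a • g` integral. -/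
def LowestDenom (g : Matrix (Fin 2) (Fin 2) ℚ) (a : ℚ) : Prop :=
  (0 < a ∧ IntEntries (a • g)) ∧ ∀ b : ℚ, 0 < b → IntEntries (b • g) → a ≤ b

/-! Since `a • g` and `b • h` are integral, so is `(a * b) • (g * h)`; minimality of `c` gives
`c ≤ a * b`, and `det (x • m) = x ^ 2 * det m` turns this into the inequality of determinants. -/

lemma IntEntries.mul {m n : Matrix (Fin 2) (Fin 2) ℚ}
    (hm : IntEntries m) (hn : IntEntries n) : IntEntries (m * n) := by
  intro i j
  obtain ⟨z0, h0⟩ := hm i 0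
  obtain ⟨z1, h1⟩ := hm i 1
  obtain ⟨w0, hw0⟩ := hn 0 j
  obtain ⟨w1, hw1⟩ := hn 1 j
  exact ⟨z0 * w0 + z1 * w1, by simp [Matrix.mul_apply, Fin.sum_univ_two, h0, h1, hw0, hw1]⟩

lemma LowestDenom.le_mul {g h : Matrix (Fin 2) (Fin 2) ℚ} {a b c : ℚ}
    (ha : LowestDenom g a) (hb : LowestDenom h b) (hc : LowestDenom (g * h) c) : c ≤ a * b := by
  refine hc.2 _ (mul_pos ha.1.1 hb.1.1) ?_
  have hsplit : (a * b) • (g * h) = (a • g) * (b • h) := by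
    rw [Matrix.smul_mul, Matrix.mul_smul, smul_smul, mul_comm a b]
  exact hsplit ▸ ha.1.2.mul hb.1.2

lemma Matrix.det_smul_fin_two (x : ℚ) (m : Matrix (Fin 2) (Fin 2) ℚ) :
    (x • m).det = x ^ 2 * m.det := by
  simp

theorem delta1_submultiplicative (g h : Matrix (Fin 2) (Fin 2) ℚ)
    (hg : 0 < g.det) (hh : 0 < h.det) (a b c : ℚ)
    (ha : LowestDenom g a) (hb : LowestDenom h b) (hc : LowestDenom (g * h) c) :
    (c • (g * h)).det ≤ (a • g).det * (b • h).det := by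
  have hsq : c ^ 2 ≤ (a * b) ^ 2 :=
    pow_le_pow_left₀ hc.1.1.le (ha.le_mul hb hc) 2
  simp only [Matrix.det_smul_fin_two, Matrix.det_mul]
  calc c ^ 2 * (g.det * h.det) ≤ (a * b) ^ 2 * (g.det * h.det) :=
        mul_le_mul_of_nonneg_right hsq (mul_pos hg hh).le
    _ = a ^ 2 * g.det * (b ^ 2 * h.det) := by ring
end

section
/- For g ∈ GL₂⁺(ℚ), write δ₁(g) = det(s(g)) where s(g) = α_g·g is the integral representative of g in lowest terms. If δ₁(g) = p^m · k and δ₁(h) = p^n · k' with p prime, p ∤ k, p ∤ k', and if δ₁(gh) is a power of p, then δ₁(gh) divides p^{m+n}·(kk')², confirming that paths in the p-adic tree T_p have lengths governed by p-adic valuations. -/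
open Matrix

/-!
The scalings `r` making `r • g` integral form a subgroup of `ℚ`, so the least positive one, `α_g`,
divides all the others. Since `(α_g • g) * (α_h • h) = (α_g α_h) • (g h)` is integral,
`α_g α_h = t α_{gh}` for an integer `t`, and taking determinants gives
`δ₁(g) δ₁(h) = t² δ₁(gh)`.
-/

namespace IntEntries

lemma sub_intCast_mul_smul {g : Matrix (Fin 2) (Fin 2) ℚ} {r c : ℚ} (t : ℤ)
    (hr : IntEntries (r • g)) (hc : IntEntries (c • g)) :
    IntEntries ((r - t * c) • g) := by
  intro i j
  obtain ⟨x, hx⟩ := hr i j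
  obtain ⟨y, hy⟩ := hc i j
  refine ⟨x - t * y, ?_⟩
  simp only [Matrix.smul_apply, smul_eq_mul] at hx hy ⊢
  push_cast
  rw [← hx, ← hy]
  ring

lemma smul_mul_smul {g h : Matrix (Fin 2) (Fin 2) ℚ} {a b : ℚ}
    (hg : IntEntries (a • g)) (hh : IntEntries (b • h)) :
    IntEntries ((a * b) • (g * h)) := by
  choose x hx using hg
  choose y hy using hh
  intro i j
  refine ⟨∑ l, x i l * y l j, ?_⟩
  rw [← smul_mul_smul_comm, mul_apply]
  push_cast
  exact Finset.sum_congr rfl fun l _ => by rw [← hx, ← hy]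
end IntEntries

namespace LowestDenom

variable {g h : Matrix (Fin 2) (Fin 2) ℚ} {a b c r : ℚ}

lemma exists_intCast_mul_eq (hc : LowestDenom g c) (hr : IntEntries (r • g)) :
    ∃ t : ℤ, r = t * c := by
  obtain ⟨⟨hc0, hcg⟩, hmin⟩ := hc
  refine ⟨⌊r / c⌋, ?_⟩
  set s := r - ⌊r / c⌋ * c
  have hs : s = c * Int.fract (r / c) := by
    rw [Int.fract, mul_sub, mul_div_cancel₀ _ hc0.ne']
    ring
  have hs_lt : s < c := hs ▸ mul_lt_of_lt_one_right hc0 (Int.fract_lt_one _)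
  have hs0 : s = 0 := by
    by_contra hne
    have hpos : 0 < s := (hs ▸ mul_nonneg hc0.le (Int.fract_nonneg _)).lt_of_ne' hne
    exact (hmin s hpos (hr.sub_intCast_mul_smul _ hcg)).not_gt hs_lt
  linarith

lemma exists_det_mul_det_eq (hc : LowestDenom (g * h) c) (hg : IntEntries (a • g))
    (hh : IntEntries (b • h)) :
    ∃ t : ℤ, (a • g).det * (b • h).det = t ^ 2 * (c • (g * h)).det := by
  obtain ⟨t, ht⟩ := hc.exists_intCast_mul_eq (hg.smul_mul_smul hh)
  refine ⟨t, ?_⟩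
  rw [← det_mul, smul_mul_smul_comm, ht, mul_smul, det_smul, Fintype.card_fin]

end LowestDenom

theorem delta1_padic_valuation_general (g h : Matrix (Fin 2) (Fin 2) ℚ)
    (a b c : ℚ)
    (ha : LowestDenom g a) (hb : LowestDenom h b) (hc : LowestDenom (g * h) c)
    (p : ℕ) (m n : ℕ) (k k' : ℕ)
    (hδg : (a • g).det = ((p : ℚ) ^ m * k)) (hδh : (b • h).det = ((p : ℚ) ^ n * k'))
    (j : ℕ) (hδgh : (c • (g * h)).det = (p : ℚ) ^ j) :
    p ^ j ∣ p ^ (m + n) * (k * k') ^ 2 := by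
  obtain ⟨t, ht⟩ := hc.exists_det_mul_det_eq ha.1.2 hb.1.2
  rw [hδg, hδh, hδgh] at ht
  have hZ : (p : ℤ) ^ (m + n) * (k * k') = t ^ 2 * p ^ j := by
    rw [pow_add]
    exact_mod_cast (by linear_combination ht : (p : ℚ) ^ m * p ^ n * (k * k') = t ^ 2 * p ^ j)
  have hdvd : (p : ℤ) ^ j ∣ p ^ (m + n) * (k * k') ^ 2 :=
    (Dvd.intro_left _ hZ.symm).trans (mul_dvd_mul_left _ (dvd_pow_self _ two_ne_zero))
  exact_mod_cast hdvd

theorem delta1_padic_valuation (g h : Matrix (Fin 2) (Fin 2) ℚ)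
    (hg : 0 < g.det) (hh : 0 < h.det) (a b c : ℚ)
    (ha : LowestDenom g a) (hb : LowestDenom h b) (hc : LowestDenom (g * h) c)
    (p : ℕ) (hp : p.Prime) (m n : ℕ) (k k' : ℕ)
    (hk : ¬ p ∣ k) (hk' : ¬ p ∣ k')
    (hδg : (a • g).det = ((p : ℚ) ^ m * k)) (hδh : (b • h).det = ((p : ℚ) ^ n * k'))
    (j : ℕ) (hδgh : (c • (g * h)).det = (p : ℚ) ^ j) :
    p ^ j ∣ p ^ (m + n) * (k * k') ^ 2 :=
  delta1_padic_valuation_general g h a b c ha hb hc p m n k k' hδg hδh j hδgh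
end

section
/- The function on GL₂⁺(ℚ)/ℚ* given by d(ḡ, h̄) = log δ₁(g h⁻¹) descends to a well-defined metric on PSL₂(ℤ)\PGL₂⁺(ℚ): it is well-defined on double classes, nonnegative, zero iff the classes coincide, symmetric, and satisfies the triangle inequality. -/
/-!
Every nonzero rational matrix `g` has a unique positive multiple `a • g` that is integral with
coprime entries, and `δ₁(g)` is its determinant. Negation, multiplication by `SL₂(ℤ)` and the
adjugate preserve this primitivity, so `δ₁` is invariant under scalars, under `SL₂(ℤ)` and under
inversion; this gives well-definedness on classes and symmetry. For `det g > 0` the primitive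
multiple has positive integer determinant, so `δ₁ ≥ 1`, with `δ₁(g h⁻¹) = 1` exactly when the
primitive multiple of `g h⁻¹` lies in `SL₂(ℤ)`. For the triangle inequality: if `m`, `n` are the
primitive multiples of `g`, `h`, then `m n = z • p` with `p` the primitive multiple of `g h` and `z`
an integer, so `δ₁(g) δ₁(h) = z² δ₁(g h) ≥ δ₁(g h)`.
-/

open Matrix

open Classical in
/-- The lowest common denominator `α_g` of a rational matrix (chosen via choice). -/
noncomputable def alphaOf (g : Matrix (Fin 2) (Fin 2) ℚ) : ℚ :=
  if h : ∃ a : ℚ, LowestDenom g a then h.choose else 1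

/-- Conway's hyperdistance `δ₁(g) = det (α_g • g)`. -/
noncomputable def delta1 (g : Matrix (Fin 2) (Fin 2) ℚ) : ℚ :=
  (alphaOf g • g).det

/-- `d(g,h) = log δ₁(g h⁻¹)`. -/
noncomputable def dist1 (g h : Matrix (Fin 2) (Fin 2) ℚ) : ℝ :=
  Real.log (delta1 (g * h⁻¹))

/-- `g` and `h` define the same class in `PSL₂(ℤ)\PGL₂⁺(ℚ)`. -/
def SameClass (g h : Matrix (Fin 2) (Fin 2) ℚ) : Prop :=
  ∃ α : ℚ, α ≠ 0 ∧ ∃ γ : Matrix.SpecialLinearGroup (Fin 2) ℤ,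
    h = α • ((γ.1.map (Int.cast : ℤ → ℚ)) * g)

section

variable {n K R : Type*} [Fintype n] [DecidableEq n] [Field K] [CommRing R]

lemma ne_zero_of_det_ne_zero [Nonempty n] {A : Matrix n n K} (hA : A.det ≠ 0) : A ≠ 0 := by
  rintro rfl
  simp at hA

lemma det_mul_nonsing_inv (A B : Matrix n n K) : (A * B⁻¹).det = A.det / B.det := by
  rw [det_mul, det_nonsing_inv, Ring.inverse_eq_inv', div_eq_mul_inv]

lemma det_mul_nonsing_inv_ne_zero {A B : Matrix n n K} (hA : A.det ≠ 0) (hB : B.det ≠ 0) :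
    (A * B⁻¹).det ≠ 0 := by
  rw [det_mul_nonsing_inv]
  exact div_ne_zero hA hB

lemma det_mul_nonsing_inv_pos [LinearOrder K] [IsStrictOrderedRing K] {A B : Matrix n n K}
    (hA : 0 < A.det) (hB : 0 < B.det) : 0 < (A * B⁻¹).det := by
  rw [det_mul_nonsing_inv]
  positivity

lemma specialLinearGroup_inv_mul_map_intCast (γ : Matrix.SpecialLinearGroup n ℤ) :
    (γ⁻¹).1.map (Int.cast : ℤ → R) * γ.1.map (Int.cast : ℤ → R) = 1 := by
  change (Int.castRingHom R).mapMatrix _ * (Int.castRingHom R).mapMatrix _ = 1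
  rw [← map_mul, ← Matrix.SpecialLinearGroup.coe_mul, inv_mul_cancel,
    Matrix.SpecialLinearGroup.coe_one, map_one]

lemma det_map_intCast_specialLinearGroup (γ : Matrix.SpecialLinearGroup n ℤ) :
    (γ.1.map (Int.cast : ℤ → R)).det = 1 := by
  change ((Int.castRingHom R).mapMatrix γ.1).det = 1
  rw [← RingHom.map_det, γ.2, map_one]

end

section

variable {g g' h k m : Matrix (Fin 2) (Fin 2) ℚ}

def intMatrices : Subring (Matrix (Fin 2) (Fin 2) ℚ) := (Int.castRingHom ℚ).mapMatrix.range

lemma intEntries_iff_mem_intMatrices : IntEntries m ↔ m ∈ intMatrices := by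
  refine ⟨fun hm => ⟨fun i j => (hm i j).choose, ?_⟩, ?_⟩
  · ext i j
    exact (hm i j).choose_spec.symm
  · rintro ⟨M, rfl⟩ i j
    exact ⟨M i j, rfl⟩

lemma IntEntries.mul_s17 (hg : IntEntries g) (hh : IntEntries h) : IntEntries (g * h) := by
  rw [intEntries_iff_mem_intMatrices] at *
  exact Subring.mul_mem _ hg hh

lemma IntEntries.neg (hm : IntEntries m) : IntEntries (-m) := by
  rw [intEntries_iff_mem_intMatrices] at *
  exact Subring.neg_mem _ hm

lemma IntEntries.adjugate (hm : IntEntries m) : IntEntries m.adjugate := by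
  obtain ⟨M, rfl⟩ := intEntries_iff_mem_intMatrices.1 hm
  exact intEntries_iff_mem_intMatrices.2 ⟨M.adjugate, RingHom.map_adjugate _ M⟩

lemma IntEntries.exists_det_eq (hm : IntEntries m) : ∃ z : ℤ, m.det = z := by
  obtain ⟨M, rfl⟩ := intEntries_iff_mem_intMatrices.1 hm
  exact ⟨M.det, (RingHom.map_det _ M).symm⟩

lemma IntEntries.one_le_det (hm : IntEntries m) (hpos : 0 < m.det) : 1 ≤ m.det := by
  obtain ⟨z, hz⟩ := hm.exists_det_eq
  rw [hz] at hpos ⊢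
  exact_mod_cast hpos

lemma intEntries_map_intCast (M : Matrix (Fin 2) (Fin 2) ℤ) :
    IntEntries (M.map (Int.cast : ℤ → ℚ)) :=
  fun i j => ⟨M i j, rfl⟩

lemma exists_pos_intEntries_smul (g : Matrix (Fin 2) (Fin 2) ℚ) :
    ∃ d : ℕ, 0 < d ∧ IntEntries ((d : ℚ) • g) := by
  refine ⟨∏ p : Fin 2 × Fin 2, (g p.1 p.2).den, Finset.prod_pos fun p _ => (g p.1 p.2).den_pos,
    fun i j => ?_⟩
  obtain ⟨c, hc⟩ : (g i j).den ∣ ∏ p : Fin 2 × Fin 2, (g p.1 p.2).den :=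
    Finset.dvd_prod_of_mem (fun p : Fin 2 × Fin 2 => (g p.1 p.2).den) (Finset.mem_univ (i, j))
  refine ⟨c * (g i j).num, ?_⟩
  rw [Matrix.smul_apply, smul_eq_mul, hc, Nat.cast_mul, mul_comm ((g i j).den : ℚ), mul_assoc,
    Rat.den_mul_eq_num, Int.cast_mul, Int.cast_natCast]

/-- An integral matrix with coprime entries, phrased without gcds: its only integral rational
multiples are its integer multiples. -/
def IsPrimitiveIntegral (m : Matrix (Fin 2) (Fin 2) ℚ) : Prop :=
  IntEntries m ∧ ∀ r : ℚ, IntEntries (r • m) → ∃ z : ℤ, r = z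

lemma isPrimitiveIntegral_one : IsPrimitiveIntegral 1 :=
  ⟨intEntries_iff_mem_intMatrices.2 (Subring.one_mem _), fun r hr => by simpa using hr 0 0⟩

lemma IsPrimitiveIntegral.neg (hm : IsPrimitiveIntegral m) : IsPrimitiveIntegral (-m) := by
  refine ⟨hm.1.neg, fun r hr => ?_⟩
  obtain ⟨z, hz⟩ := hm.2 (-r) (by simpa using hr)
  exact ⟨-z, by push_cast; linarith⟩

lemma IsPrimitiveIntegral.specialLinearGroup_mul (hm : IsPrimitiveIntegral m)
    (γ : Matrix.SpecialLinearGroup (Fin 2) ℤ) :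
    IsPrimitiveIntegral (γ.1.map (Int.cast : ℤ → ℚ) * m) := by
  refine ⟨(intEntries_map_intCast _).mul_s17 hm.1, fun r hr => hm.2 r ?_⟩
  have := (intEntries_map_intCast (γ⁻¹).1).mul_s17 hr
  rwa [mul_smul_comm, ← Matrix.mul_assoc, specialLinearGroup_inv_mul_map_intCast,
    Matrix.one_mul] at this

lemma IsPrimitiveIntegral.adjugate (hm : IsPrimitiveIntegral m) :
    IsPrimitiveIntegral m.adjugate := by
  refine ⟨hm.1.adjugate, fun r hr => hm.2 r ?_⟩
  have := hr.adjugate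
  rwa [adjugate_smul, adjugate_adjugate', Fintype.card_fin, pow_zero, one_smul, pow_one] at this

lemma isPrimitiveIntegral_of_gcd_eq_one {P : Matrix (Fin 2) (Fin 2) ℤ}
    (hP : Finset.univ.gcd (fun p : Fin 2 × Fin 2 => P p.1 p.2) = 1) :
    IsPrimitiveIntegral (P.map (Int.cast : ℤ → ℚ)) := by
  refine ⟨intEntries_map_intCast P, fun r hr => ?_⟩
  -- Bézout: `∑ Pₚ uₚ = 1`, so `r = ∑ (r Pₚ) uₚ` is an integer.
  obtain ⟨u, hu⟩ := Finset.gcd_eq_sum_mul Finset.univ (fun p : Fin 2 × Fin 2 => P p.1 p.2)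
  choose z hz using hr
  refine ⟨∑ p : Fin 2 × Fin 2, z p.1 p.2 * u p, ?_⟩
  have hr : ∀ p : Fin 2 × Fin 2, r * P p.1 p.2 = z p.1 p.2 := fun p => by simpa using hz p.1 p.2
  calc r = r * ((∑ p : Fin 2 × Fin 2, P p.1 p.2 * u p : ℤ) : ℚ) := by rw [← hu, hP]; simp
    _ = _ := by push_cast; simp only [Finset.mul_sum, ← mul_assoc, hr]

lemma exists_pos_smul_isPrimitiveIntegral (hg : g ≠ 0) :
    ∃ a : ℚ, 0 < a ∧ IsPrimitiveIntegral (a • g) := by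
  -- Clear denominators, then divide by the gcd `c` of the entries: `a = d / c`.
  obtain ⟨d, hd, hdg⟩ := exists_pos_intEntries_smul g
  obtain ⟨N, hN⟩ := intEntries_iff_mem_intMatrices.1 hdg
  obtain ⟨P, hNP, hP⟩ :=
    Finset.extract_gcd (fun p : Fin 2 × Fin 2 => N p.1 p.2) Finset.univ_nonempty
  set c := Finset.univ.gcd (fun p : Fin 2 × Fin 2 => N p.1 p.2)
  have hc : 0 < c := by
    refine lt_of_le_of_ne (Int.nonneg_of_normalize_eq_self Finset.normalize_gcd) fun hc0 => hg ?_
    have hN0 : N = 0 := by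
      ext i j
      exact Finset.gcd_eq_zero_iff.1 hc0.symm (i, j) (Finset.mem_univ _)
    rw [hN0, map_zero] at hN
    exact (smul_eq_zero.1 hN.symm).resolve_left (by positivity)
  refine ⟨d / c, by positivity, ?_⟩
  convert isPrimitiveIntegral_of_gcd_eq_one (P := Matrix.of fun i j => P (i, j)) hP using 1
  ext i j
  have hij := congrArg (· i j) hN
  simp only [RingHom.mapMatrix_apply, Matrix.map_apply, Int.coe_castRingHom, Matrix.smul_apply,
    smul_eq_mul, hNP (i, j) (Finset.mem_univ _), Int.cast_mul] at hij
  simp only [Matrix.smul_apply, smul_eq_mul, Matrix.map_apply, Matrix.of_apply]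
  have hcq : (c : ℚ) ≠ 0 := by exact_mod_cast hc.ne'
  field_simp
  linarith

lemma lowestDenom_of_isPrimitiveIntegral {a : ℚ} (ha : 0 < a) (hag : IsPrimitiveIntegral (a • g)) :
    LowestDenom g a := by
  refine ⟨⟨ha, hag.1⟩, fun b hb hbg => ?_⟩
  obtain ⟨z, hz⟩ := hag.2 (b / a) (by rwa [smul_smul, div_mul_cancel₀ _ ha.ne'])
  have hz1 : (1 : ℚ) ≤ z := by exact_mod_cast (hz ▸ div_pos hb ha : (0 : ℚ) < z)
  calc a = 1 * a := (one_mul a).symm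
    _ ≤ z * a := by gcongr
    _ = b := by rw [← hz, div_mul_cancel₀ _ ha.ne']

lemma alphaOf_eq_of_lowestDenom {a : ℚ} (ha : LowestDenom g a) : alphaOf g = a := by
  have hex : ∃ a, LowestDenom g a := ⟨a, ha⟩
  have hα := hex.choose_spec
  rw [alphaOf, dif_pos hex]
  exact le_antisymm (hα.2 a ha.1.1 ha.1.2) (ha.2 _ hα.1.1 hα.1.2)

lemma delta1_eq_det_smul {a : ℚ} (ha : 0 < a) (hag : IsPrimitiveIntegral (a • g)) :
    delta1 g = (a • g).det := by
  rw [delta1, alphaOf_eq_of_lowestDenom (lowestDenom_of_isPrimitiveIntegral ha hag)]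

lemma IsPrimitiveIntegral.delta1_eq_det (hm : IsPrimitiveIntegral m) : delta1 m = m.det := by
  rw [delta1_eq_det_smul one_pos (by rwa [one_smul]), one_smul]

lemma delta1_smul {c : ℚ} (hc : c ≠ 0) (g : Matrix (Fin 2) (Fin 2) ℚ) :
    delta1 (c • g) = delta1 g := by
  rcases eq_or_ne g 0 with rfl | hg
  · rw [smul_zero]
  obtain ⟨a, ha, hag⟩ := exists_pos_smul_isPrimitiveIntegral hg
  rw [delta1_eq_det_smul ha hag]
  rcases hc.lt_or_gt with hc | hc
  · have hneg : (a / -c) • c • g = -(a • g) := by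
      rw [smul_smul, div_mul_eq_mul_div, div_neg, mul_div_assoc, div_self hc.ne, mul_one, neg_smul]
    rw [delta1_eq_det_smul (div_pos ha (neg_pos.2 hc)) (hneg ▸ hag.neg), hneg, det_neg,
      Fintype.card_fin, neg_one_sq, one_mul]
  · have hpos : (a / c) • c • g = a • g := by rw [smul_smul, div_mul_cancel₀ _ hc.ne']
    rw [delta1_eq_det_smul (div_pos ha hc) (hpos ▸ hag), hpos]

lemma delta1_specialLinearGroup_mul (γ : Matrix.SpecialLinearGroup (Fin 2) ℤ)
    (g : Matrix (Fin 2) (Fin 2) ℚ) : delta1 (γ.1.map (Int.cast : ℤ → ℚ) * g) = delta1 g := by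
  rcases eq_or_ne g 0 with rfl | hg
  · rw [Matrix.mul_zero]
  obtain ⟨a, ha, hag⟩ := exists_pos_smul_isPrimitiveIntegral hg
  have hγ : a • (γ.1.map (Int.cast : ℤ → ℚ) * g) = γ.1.map (Int.cast : ℤ → ℚ) * (a • g) :=
    (mul_smul_comm a _ g).symm
  rw [delta1_eq_det_smul ha (hγ ▸ hag.specialLinearGroup_mul γ), delta1_eq_det_smul ha hag, hγ,
    det_mul, det_map_intCast_specialLinearGroup, one_mul]

lemma delta1_inv (hg : g.det ≠ 0) : delta1 g⁻¹ = delta1 g := by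
  obtain ⟨a, ha, hag⟩ := exists_pos_smul_isPrimitiveIntegral (ne_zero_of_det_ne_zero hg)
  set m := a • g
  have hm : m.det ≠ 0 := by simp [m, ha.ne', hg]
  have hinv : g⁻¹ = (a * m.det⁻¹) • m.adjugate := by
    refine inv_eq_left_inv ?_
    rw [smul_mul_assoc, show g = a⁻¹ • m by rw [smul_smul, inv_mul_cancel₀ ha.ne', one_smul],
      mul_smul_comm, adjugate_mul, smul_smul, smul_smul,
      show a * m.det⁻¹ * a⁻¹ * m.det = 1 by field_simp, one_smul]
  rw [hinv, delta1_smul (mul_ne_zero ha.ne' (inv_ne_zero hm)), hag.adjugate.delta1_eq_det,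
    delta1_eq_det_smul ha hag, det_adjugate, Fintype.card_fin, pow_one]

lemma one_le_delta1 (hg : 0 < g.det) : 1 ≤ delta1 g := by
  obtain ⟨a, ha, hag⟩ := exists_pos_smul_isPrimitiveIntegral (ne_zero_of_det_ne_zero hg.ne')
  rw [delta1_eq_det_smul ha hag]
  exact hag.1.one_le_det (by rw [det_smul]; positivity)

lemma delta1_mul_le (hg : 0 < g.det) (hh : 0 < h.det) : delta1 (g * h) ≤ delta1 g * delta1 h := by
  obtain ⟨a, ha, hag⟩ := exists_pos_smul_isPrimitiveIntegral (ne_zero_of_det_ne_zero hg.ne')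
  obtain ⟨b, hb, hbh⟩ := exists_pos_smul_isPrimitiveIntegral (ne_zero_of_det_ne_zero hh.ne')
  obtain ⟨c, hc, hcgh⟩ := exists_pos_smul_isPrimitiveIntegral (g := g * h)
    (ne_zero_of_det_ne_zero (by rw [det_mul]; exact (mul_pos hg hh).ne'))
  have hprod : (a • g) * (b • h) = (a * b / c) • c • (g * h) := by
    rw [smul_smul, div_mul_cancel₀ _ hc.ne', smul_mul_smul_comm]
  obtain ⟨z, hz⟩ := hcgh.2 _ (hprod ▸ hag.1.mul_s17 hbh.1)
  have hz1 : (1 : ℚ) ≤ (z : ℚ) ^ 2 := by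
    have : (0 : ℚ) < z := hz ▸ by positivity
    exact one_le_pow₀ (by exact_mod_cast this)
  rw [delta1_eq_det_smul ha hag, delta1_eq_det_smul hb hbh, delta1_eq_det_smul hc hcgh, ← det_mul,
    hprod, hz, det_smul _ (z : ℚ), Fintype.card_fin]
  have hdet : 0 ≤ (c • (g * h)).det := by rw [det_smul, det_mul]; positivity
  exact le_mul_of_one_le_left hdet hz1

lemma sameClass_of_delta1_mul_inv_eq_one (hg : g.det ≠ 0) (hh : h.det ≠ 0)
    (h1 : delta1 (g * h⁻¹) = 1) : SameClass g h := by
  obtain ⟨a, ha, hm⟩ := exists_pos_smul_isPrimitiveIntegral (g := g * h⁻¹)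
    (ne_zero_of_det_ne_zero (det_mul_nonsing_inv_ne_zero hg hh))
  obtain ⟨M, hM⟩ := intEntries_iff_mem_intMatrices.1 hm.1
  have hdetM : M.det = 1 := by
    rwa [delta1_eq_det_smul ha hm, ← hM, ← RingHom.map_det, eq_intCast, Int.cast_eq_one] at h1
  set γ : Matrix.SpecialLinearGroup (Fin 2) ℤ := ⟨M, hdetM⟩
  refine ⟨a, ha.ne', γ⁻¹, ?_⟩
  calc h = ((γ⁻¹).1.map (Int.cast : ℤ → ℚ) * γ.1.map (Int.cast : ℤ → ℚ)) * h := by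
        rw [specialLinearGroup_inv_mul_map_intCast, Matrix.one_mul]
    _ = (γ⁻¹).1.map (Int.cast : ℤ → ℚ) * (a • (g * h⁻¹) * h) := by
        rw [Matrix.mul_assoc, ← hM]; rfl
    _ = a • ((γ⁻¹).1.map (Int.cast : ℤ → ℚ) * g) := by
        rw [smul_mul_assoc, Matrix.mul_assoc, nonsing_inv_mul _ (isUnit_iff_ne_zero.2 hh),
          Matrix.mul_one, mul_smul_comm]

lemma SameClass.det_ne_zero (hs : SameClass g g') (hg : g.det ≠ 0) : g'.det ≠ 0 := by
  obtain ⟨α, hα, γ, rfl⟩ := hs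
  rw [det_smul, det_mul, det_map_intCast_specialLinearGroup]
  simp [hα, hg]

lemma dist1_eq_of_sameClass_left (hs : SameClass g g') (h : Matrix (Fin 2) (Fin 2) ℚ) :
    dist1 g' h = dist1 g h := by
  obtain ⟨α, hα, γ, rfl⟩ := hs
  rw [dist1, dist1, smul_mul_assoc, Matrix.mul_assoc, delta1_smul hα,
    delta1_specialLinearGroup_mul]

lemma dist1_comm (hg : g.det ≠ 0) (hh : h.det ≠ 0) : dist1 g h = dist1 h g := by
  rw [dist1, dist1, ← delta1_inv (det_mul_nonsing_inv_ne_zero hg hh), Matrix.mul_inv_rev,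
    nonsing_inv_nonsing_inv _ (isUnit_iff_ne_zero.2 hh)]

lemma dist1_self (hg : g.det ≠ 0) : dist1 g g = 0 := by
  rw [dist1, mul_nonsing_inv _ (isUnit_iff_ne_zero.2 hg), isPrimitiveIntegral_one.delta1_eq_det,
    det_one, Rat.cast_one, Real.log_one]

lemma dist1_nonneg (hg : 0 < g.det) (hh : 0 < h.det) : 0 ≤ dist1 g h :=
  Real.log_nonneg (by exact_mod_cast one_le_delta1 (det_mul_nonsing_inv_pos hg hh))

lemma dist1_eq_zero_iff (hg : 0 < g.det) (hh : 0 < h.det) : dist1 g h = 0 ↔ SameClass g h := by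
  refine ⟨fun h0 => sameClass_of_delta1_mul_inv_eq_one hg.ne' hh.ne' ?_, fun hs => ?_⟩
  · by_contra hne
    have hlt : 1 < delta1 (g * h⁻¹) := (one_le_delta1 (det_mul_nonsing_inv_pos hg hh)).lt_of_ne' hne
    exact (Real.log_pos (by exact_mod_cast hlt)).ne' h0
  · rw [← dist1_eq_of_sameClass_left hs, dist1_self hh.ne']

lemma dist1_triangle (hg : 0 < g.det) (hh : 0 < h.det) (hk : 0 < k.det) :
    dist1 g k ≤ dist1 g h + dist1 h k := by
  have hsplit : g * k⁻¹ = (g * h⁻¹) * (h * k⁻¹) := by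
    rw [Matrix.mul_assoc, ← Matrix.mul_assoc h⁻¹, nonsing_inv_mul _ (isUnit_iff_ne_zero.2 hh.ne'),
      Matrix.one_mul]
  have hgh := det_mul_nonsing_inv_pos hg hh
  have hhk := det_mul_nonsing_inv_pos hh hk
  have hpos : ∀ {m : Matrix (Fin 2) (Fin 2) ℚ}, 0 < m.det → (0 : ℝ) < delta1 m := fun hm =>
    by exact_mod_cast zero_lt_one.trans_le (one_le_delta1 hm)
  rw [dist1, dist1, dist1, ← Real.log_mul (hpos hgh).ne' (hpos hhk).ne', hsplit]
  refine Real.log_le_log (hpos (hsplit ▸ det_mul_nonsing_inv_pos hg hk)) ?_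
  exact_mod_cast delta1_mul_le hgh hhk

end

/-- `log δ₁(g h⁻¹)` descends to a well-defined metric on `PSL₂(ℤ)\PGL₂⁺(ℚ)`. -/
theorem dist1_is_metric_on_classes :
    (∀ g g' h h' : Matrix (Fin 2) (Fin 2) ℚ, 0 < g.det → 0 < h.det →
      SameClass g g' → SameClass h h' → dist1 g h = dist1 g' h') ∧
    (∀ g h : Matrix (Fin 2) (Fin 2) ℚ, 0 < g.det → 0 < h.det → 0 ≤ dist1 g h) ∧
    (∀ g h : Matrix (Fin 2) (Fin 2) ℚ, 0 < g.det → 0 < h.det →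
      (dist1 g h = 0 ↔ SameClass g h)) ∧
    (∀ g h : Matrix (Fin 2) (Fin 2) ℚ, 0 < g.det → 0 < h.det →
      dist1 g h = dist1 h g) ∧
    (∀ g h k : Matrix (Fin 2) (Fin 2) ℚ, 0 < g.det → 0 < h.det → 0 < k.det →
      dist1 g k ≤ dist1 g h + dist1 h k) := by
  refine ⟨fun g g' h h' hg hh hgg' hhh' => ?_, fun g h => dist1_nonneg,
    fun g h => dist1_eq_zero_iff, fun g h hg hh => dist1_comm hg.ne' hh.ne',
    fun g h k => dist1_triangle⟩
  have hg' := hgg'.det_ne_zero hg.ne'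
  have hh' := hhh'.det_ne_zero hh.ne'
  calc dist1 g h = dist1 g' h := (dist1_eq_of_sameClass_left hgg' h).symm
    _ = dist1 h g' := dist1_comm hg' hh.ne'
    _ = dist1 h' g' := (dist1_eq_of_sameClass_left hhh' g').symm
    _ = dist1 g' h' := dist1_comm hh' hg'
end
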